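/- arXiv:2002.08837 — 6 statements merged into one kernel-verified Lean document; each statement's English description precedes it below -/
import Mathlib

section
/- WSU regret bound: let losses ℓ_{i,t} ∈ [0,1] and weights evolve by π_{i,t+1} = π_{i,t}(1 - η L_{i,t}) with L_{i,t} = ℓ_{i,t} - Σ_j π_{j,t} ℓ_{j,t}, π_{i,1} = 1/K, and 0 < η ≤ 1/2. Then for any expert i*, Σ_{t∈[T]} Σ_{j∈[K]} π_{j,t} ℓ_{j,t} - Σ_{t∈[T]} ℓ_{i*,t} ≤ (ln K)/η + η T. -/
/-- For |x| ≤ 1/2, log(1-x) ≥ -x - x². -/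
lemma log_one_sub_ge_aux (x : ℝ) (hx : |x| ≤ 1/2) :
    -x - x^2 ≤ Real.log (1 - x) := by
  have hx1 : |x| < 1 := lt_of_le_of_lt hx (by norm_num)
  have h := Real.abs_log_sub_add_sum_range_le hx1 4
  have hsum : (∑ i ∈ Finset.range 4, x ^ (i+1) / (i+1))
      = x + x^2/2 + x^3/3 + x^4/4 := by
    simp [Finset.sum_range_succ]
    ring
  rw [hsum] at h
  have habs0 : (0:ℝ) ≤ |x| := abs_nonneg x
  have hpow : |x|^5 ≤ (1/2) * x^4 := by
    have h4 : |x|^4 = x^4 := by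
      rw [← abs_pow]; exact abs_of_nonneg (by positivity)
    calc |x|^5 = |x| * |x|^4 := by ring
      _ ≤ (1/2) * |x|^4 := by
          apply mul_le_mul_of_nonneg_right hx (by positivity)
      _ = (1/2) * x^4 := by rw [h4]
  have h5 : |x|^5 / (1 - |x|) ≤ x^4 := by
    rw [div_le_iff₀ (by linarith : (0:ℝ) < 1 - |x|)]
    nlinarith [pow_nonneg habs0 5, pow_nonneg habs0 4]
  have habs := abs_le.mp (h.trans h5)
  have h1 : 0 ≤ 1/2 - x := by
    have := (abs_le.mp hx).2; linarith
  have h2 : 0 ≤ 1/4 - x^2 := by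
    nlinarith [(abs_le.mp hx).1, (abs_le.mp hx).2]
  nlinarith [habs.1, mul_nonneg (sq_nonneg x) h1, mul_nonneg (sq_nonneg x) h2]

/-- WSU regret bound: regret at most (ln K)/η + ηT. -/
theorem wsu_regret_bound (K T : ℕ) (hK : 1 ≤ K)
    (ℓ : ℕ → Fin K → ℝ) (hℓ : ∀ t i, ℓ t i ∈ Set.Icc (0:ℝ) 1)
    (η : ℝ) (hη0 : 0 < η) (hη2 : η ≤ 1/2)
    (π : ℕ → Fin K → ℝ) (hinit : ∀ i, π 0 i = 1 / K)
    (hupd : ∀ t i, π (t+1) i = π t i * (1 - η * (ℓ t i - ∑ j, π t j * ℓ t j)))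
    (istar : Fin K) :
    ∑ t ∈ Finset.range T, ∑ j, π t j * ℓ t j - ∑ t ∈ Finset.range T, ℓ t istar
      ≤ Real.log K / η + η * T := by
  have hKpos : (0:ℝ) < K := by exact_mod_cast hK
  -- Invariant: positivity and sum = 1
  have hinv : ∀ t, (∀ i, 0 < π t i) ∧ (∑ i, π t i = 1) := by
    intro t
    induction t with
    | zero =>
      refine ⟨fun i => ?_, ?_⟩
      · rw [hinit]; positivity
      · simp only [hinit, Finset.sum_const, Finset.card_univ, Fintype.card_fin,
          nsmul_eq_mul]
        field_simp
    | succ t ih =>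
      obtain ⟨hpos, hsum⟩ := ih
      have havg0 : 0 ≤ ∑ j, π t j * ℓ t j :=
        Finset.sum_nonneg fun j _ => mul_nonneg (hpos j).le (hℓ t j).1
      have havg1 : (∑ j, π t j * ℓ t j) ≤ 1 := by
        calc (∑ j, π t j * ℓ t j) ≤ ∑ j, π t j * 1 :=
              Finset.sum_le_sum fun j _ =>
                mul_le_mul_of_nonneg_left (hℓ t j).2 (hpos j).le
          _ = 1 := by simpa using hsum
      have hfac : ∀ i, 0 < 1 - η * (ℓ t i - ∑ j, π t j * ℓ t j) := by
        intro i
        have h1 : ℓ t i - (∑ j, π t j * ℓ t j) ≤ 1 := by linarith [(hℓ t i).2]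
        nlinarith [(hℓ t i).1]
      refine ⟨fun i => ?_, ?_⟩
      · rw [hupd]; exact mul_pos (hpos i) (hfac i)
      · calc ∑ i, π (t+1) i
            = ∑ i, (π t i - η * (π t i * ℓ t i)
                + (η * ∑ j, π t j * ℓ t j) * π t i) := by
              refine Finset.sum_congr rfl fun i _ => ?_
              rw [hupd]; ring
          _ = (∑ i, π t i) - η * (∑ i, π t i * ℓ t i)
                + (η * ∑ j, π t j * ℓ t j) * (∑ i, π t i) := by
              rw [Finset.sum_add_distrib, Finset.sum_sub_distrib,
                ← Finset.mul_sum, ← Finset.mul_sum]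
          _ = 1 := by rw [hsum]; ring
  have hpos : ∀ t i, 0 < π t i := fun t => (hinv t).1
  have hsum1 : ∀ t, ∑ i, π t i = 1 := fun t => (hinv t).2
  have havg0 : ∀ t, 0 ≤ ∑ j, π t j * ℓ t j := fun t =>
    Finset.sum_nonneg fun j _ => mul_nonneg (hpos t j).le (hℓ t j).1
  have havg1 : ∀ t, (∑ j, π t j * ℓ t j) ≤ 1 := by
    intro t
    calc (∑ j, π t j * ℓ t j) ≤ ∑ j, π t j * 1 :=
          Finset.sum_le_sum fun j _ =>
            mul_le_mul_of_nonneg_left (hℓ t j).2 (hpos t j).le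
      _ = 1 := by simpa using hsum1 t
  -- bounds on x_t := η * L_t
  have hLabs : ∀ t, |η * (ℓ t istar - ∑ j, π t j * ℓ t j)| ≤ 1/2 := by
    intro t
    rw [abs_mul, abs_of_pos hη0]
    have hL : |ℓ t istar - ∑ j, π t j * ℓ t j| ≤ 1 := by
      rw [abs_le]
      constructor <;> [linarith [(hℓ t istar).1, havg1 t];
        linarith [(hℓ t istar).2, havg0 t]]
    calc η * |ℓ t istar - ∑ j, π t j * ℓ t j| ≤ η * 1 :=
          mul_le_mul_of_nonneg_left hL hη0.le
      _ ≤ 1/2 := by linarith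
  have hfac : ∀ t, 0 < 1 - η * (ℓ t istar - ∑ j, π t j * ℓ t j) := by
    intro t
    have := (abs_le.mp (hLabs t)).2
    linarith
  -- log telescoping
  have hlog : ∀ t, Real.log (π t istar)
      = Real.log (1/(K:ℝ))
        + ∑ s ∈ Finset.range t,
            Real.log (1 - η * (ℓ s istar - ∑ j, π s j * ℓ s j)) := by
    intro t
    induction t with
    | zero => simp [hinit]
    | succ t ih =>
      rw [Finset.sum_range_succ, hupd,
        Real.log_mul (hpos t istar).ne' (hfac t).ne', ih]
      ring
  -- upper bound on log π T istar
  have hle1 : π T istar ≤ 1 := by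
    have := Finset.single_le_sum (f := fun i => π T i)
      (fun i _ => (hpos T i).le) (Finset.mem_univ istar)
    rw [hsum1 T] at this
    exact this
  have hlogT : Real.log (π T istar) ≤ 0 := Real.log_nonpos (hpos T istar).le hle1
  -- lower bound each log term
  have hterm : ∀ t, η * ((∑ j, π t j * ℓ t j) - ℓ t istar) - η^2
      ≤ Real.log (1 - η * (ℓ t istar - ∑ j, π t j * ℓ t j)) := by
    intro t
    set x := η * (ℓ t istar - ∑ j, π t j * ℓ t j) with hx
    have h1 := log_one_sub_ge_aux x (hLabs t)
    have h2 : x^2 ≤ η^2 := by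
      have : |x| ≤ η := by
        rw [hx, abs_mul, abs_of_pos hη0]
        have hL : |ℓ t istar - ∑ j, π t j * ℓ t j| ≤ 1 := by
          rw [abs_le]
          constructor <;> [linarith [(hℓ t istar).1, havg1 t];
            linarith [(hℓ t istar).2, havg0 t]]
        nlinarith
      calc x^2 = |x|^2 := (sq_abs x).symm
        _ ≤ η^2 := by nlinarith [abs_nonneg x]
    have hxeq : -x = η * ((∑ j, π t j * ℓ t j) - ℓ t istar) := by rw [hx]; ring
    linarith
  -- sum the bounds
  have hsumlog : η * (∑ t ∈ Finset.range T,
        ((∑ j, π t j * ℓ t j) - ℓ t istar)) - η^2 * T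
      ≤ ∑ t ∈ Finset.range T,
          Real.log (1 - η * (ℓ t istar - ∑ j, π t j * ℓ t j)) := by
    have heq : ∑ t ∈ Finset.range T,
        (η * ((∑ j, π t j * ℓ t j) - ℓ t istar) - η^2)
        = η * (∑ t ∈ Finset.range T,
            ((∑ j, π t j * ℓ t j) - ℓ t istar)) - η^2 * T := by
      rw [Finset.sum_sub_distrib, ← Finset.mul_sum, Finset.sum_const,
        Finset.card_range]
      push_cast; ring
    rw [← heq]
    exact Finset.sum_le_sum fun t _ => hterm t
  have hlogK : Real.log (1/(K:ℝ)) = -Real.log K := by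
    rw [one_div, Real.log_inv]
  have hmain : η * (∑ t ∈ Finset.range T,
      ((∑ j, π t j * ℓ t j) - ℓ t istar)) ≤ Real.log K + η^2 * T := by
    have := hlog T
    rw [hlogK] at this
    linarith [hlogT, hsumlog, this ▸ hlogT]
  have hfinal : (∑ t ∈ Finset.range T, ((∑ j, π t j * ℓ t j) - ℓ t istar))
      ≤ Real.log K / η + η * T := by
    rw [div_add' _ _ _ hη0.ne']
    rw [le_div_iff₀ hη0]
    nlinarith [hmain]
  calc ∑ t ∈ Finset.range T, ∑ j, π t j * ℓ t j
        - ∑ t ∈ Finset.range T, ℓ t istar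
      = ∑ t ∈ Finset.range T, ((∑ j, π t j * ℓ t j) - ℓ t istar) := by
        rw [Finset.sum_sub_distrib]
    _ ≤ Real.log K / η + η * T := hfinal
end

section
/- With step size η = √(ln K / T) and 0 < η ≤ 1/2, the WSU regret satisfies Σ_{t∈[T]} Σ_{j∈[K]} π_{j,t} ℓ_{j,t} - min_{i∈[K]} Σ_{t∈[T]} ℓ_{i,t} ≤ 2√(T ln K). -/
/-!
A weight is multiplied in each round by `1 - x` with `x = η (ℓᵢ - m)`, where `m` is the learner's
loss, and `|x| ≤ 1/2`; since `1 - x ≥ exp (-x - x²)` there, the weight of expert `i` after `T`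
rounds is at least `(1/K) exp (η (L - Lᵢ) - η² T)`, with `L` and `Lᵢ` the cumulative losses of
the learner and of expert `i`. The weights remain a probability vector, so this is at most `1`:
`η (L - Lᵢ) ≤ log K + η² T`, and `η² T = log K` turns this into `L - Lᵢ ≤ 2 η T = 2 √(T log K)`.
-/

open Finset

section

-- Closed before the main theorem, where `π` is a variable rather than `Real.pi`.
open Real

lemma exp_neg_sub_sq_le_one_sub {x : ℝ} (hx : |x| ≤ 1 / 2) : exp (-x - x ^ 2) ≤ 1 - x := by
  obtain ⟨hxl, hxu⟩ := abs_le.1 hx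
  rw [show -x - x ^ 2 = -(x + x ^ 2) by ring, exp_neg, inv_eq_one_div,
    div_le_iff₀ (exp_pos _)]
  have h1x : (0 : ℝ) ≤ 1 - x := by linarith
  rcases le_or_gt 0 x with h | h
  · have := mul_le_mul_of_nonneg_left
      (quadratic_le_exp_of_nonneg (x := x + x ^ 2) (by positivity)) h1x
    nlinarith [sq_nonneg x, sq_nonneg (x * x)]
  · have := mul_le_mul_of_nonneg_left (add_one_le_exp (x + x ^ 2)) h1x
    nlinarith

variable {ι : Type*} [Fintype ι]

def wsuUpdate (η : ℝ) (p ℓ : ι → ℝ) (i : ι) : ℝ :=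
  p i * (1 - η * (ℓ i - ∑ j, p j * ℓ j))

variable {η : ℝ} {p ℓ : ι → ℝ}

lemma sum_mul_mem_Icc_of_mem_stdSimplex (hp : p ∈ stdSimplex ℝ ι)
    (hℓ : ∀ i, ℓ i ∈ Set.Icc (0 : ℝ) 1) : ∑ j, p j * ℓ j ∈ Set.Icc (0 : ℝ) 1 :=
  ⟨sum_nonneg fun j _ => mul_nonneg (hp.1 j) (hℓ j).1,
    hp.2 ▸ sum_le_sum fun j _ => mul_le_of_le_one_right (hp.1 j) (hℓ j).2⟩

lemma abs_sub_sum_mul_le_one (hp : p ∈ stdSimplex ℝ ι) (hℓ : ∀ i, ℓ i ∈ Set.Icc (0 : ℝ) 1)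
    (i : ι) : |ℓ i - ∑ j, p j * ℓ j| ≤ 1 :=
  have hm := sum_mul_mem_Icc_of_mem_stdSimplex hp hℓ
  abs_sub_le_of_nonneg_of_le (hℓ i).1 (hℓ i).2 hm.1 hm.2

lemma sum_wsuUpdate (hp : ∑ i, p i = 1) : ∑ i, wsuUpdate η p ℓ i = 1 := by
  simp only [wsuUpdate, mul_sub, mul_one, sum_sub_distrib, mul_left_comm _ η, ← mul_sum,
    ← sum_mul, hp]
  ring

lemma wsuUpdate_mem_stdSimplex (hp : p ∈ stdSimplex ℝ ι) (hη : |η| ≤ 1)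
    (hℓ : ∀ i, ℓ i ∈ Set.Icc (0 : ℝ) 1) : wsuUpdate η p ℓ ∈ stdSimplex ℝ ι := by
  refine ⟨fun i => mul_nonneg (hp.1 i) ?_, sum_wsuUpdate hp.2⟩
  have hc := abs_sub_sum_mul_le_one hp hℓ i
  exact sub_nonneg.2 <| (le_abs_self _).trans <| by
    rw [abs_mul]; exact mul_le_one₀ hη (abs_nonneg _) hc

lemma mul_exp_le_wsuUpdate (hp : p ∈ stdSimplex ℝ ι) (hη : |η| ≤ 1 / 2)
    (hℓ : ∀ i, ℓ i ∈ Set.Icc (0 : ℝ) 1) (i : ι) :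
    p i * exp (-(η * (ℓ i - ∑ j, p j * ℓ j)) - η ^ 2) ≤ wsuUpdate η p ℓ i := by
  have hc := abs_sub_sum_mul_le_one hp hℓ i
  set x := η * (ℓ i - ∑ j, p j * ℓ j)
  have hx : |x| ≤ 1 / 2 := by
    rw [abs_mul]; nlinarith [abs_nonneg η, abs_nonneg (ℓ i - ∑ j, p j * ℓ j)]
  have hx2 : x ^ 2 ≤ η ^ 2 := by
    rw [mul_pow]; exact mul_le_of_le_one_right (sq_nonneg η) ((sq_le_one_iff_abs_le_one _).2 hc)
  refine mul_le_mul_of_nonneg_left ?_ (hp.1 i)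
  exact (exp_le_exp.2 (by linarith)).trans (exp_neg_sub_sq_le_one_sub hx)

variable {ℓ w : ℕ → ι → ℝ}

lemma wsu_mem_stdSimplex (hupd : ∀ t, w (t + 1) = wsuUpdate η (w t) (ℓ t))
    (h0 : w 0 ∈ stdSimplex ℝ ι) (hη : |η| ≤ 1) (hℓ : ∀ t i, ℓ t i ∈ Set.Icc (0 : ℝ) 1) (t : ℕ) :
    w t ∈ stdSimplex ℝ ι := by
  induction t with
  | zero => exact h0
  | succ t ih => rw [hupd]; exact wsuUpdate_mem_stdSimplex ih hη (hℓ t)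

lemma mul_exp_le_wsu (hupd : ∀ t, w (t + 1) = wsuUpdate η (w t) (ℓ t))
    (h0 : w 0 ∈ stdSimplex ℝ ι) (hη : |η| ≤ 1 / 2) (hℓ : ∀ t i, ℓ t i ∈ Set.Icc (0 : ℝ) 1)
    (i : ι) (T : ℕ) :
    w 0 i * exp (η * ∑ t ∈ range T, (∑ j, w t j * ℓ t j - ℓ t i) - η ^ 2 * T) ≤ w T i := by
  induction T with
  | zero => simp
  | succ T ih =>
    have hsplit : η * ∑ t ∈ range (T + 1), (∑ j, w t j * ℓ t j - ℓ t i) - η ^ 2 * ↑(T + 1) =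
        (η * ∑ t ∈ range T, (∑ j, w t j * ℓ t j - ℓ t i) - η ^ 2 * T) +
          (-(η * (ℓ T i - ∑ j, w T j * ℓ T j)) - η ^ 2) := by
      rw [sum_range_succ]; push_cast; ring
    rw [hsplit, exp_add, ← mul_assoc, hupd]
    exact (mul_le_mul_of_nonneg_right ih (exp_pos _).le).trans <|
      mul_exp_le_wsuUpdate (wsu_mem_stdSimplex hupd h0 (by linarith) hℓ T) hη (hℓ T) i

theorem wsu_regret_le (hupd : ∀ t, w (t + 1) = wsuUpdate η (w t) (ℓ t))
    (h0 : w 0 ∈ stdSimplex ℝ ι) (hη : |η| ≤ 1 / 2) (hℓ : ∀ t i, ℓ t i ∈ Set.Icc (0 : ℝ) 1)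
    (i : ι) (hi : 0 < w 0 i) (T : ℕ) :
    η * (∑ t ∈ range T, ∑ j, w t j * ℓ t j - ∑ t ∈ range T, ℓ t i) ≤ -log (w 0 i) + η ^ 2 * T := by
  have hle := (mul_exp_le_wsu hupd h0 hη hℓ i T).trans
    (mem_Icc_of_mem_stdSimplex (wsu_mem_stdSimplex hupd h0 (by linarith) hℓ T) i).2
  rw [← exp_log hi, ← exp_add, exp_le_one_iff, sum_sub_distrib] at hle
  linarith

end

theorem wsu_regret_sqrt_general (K T : ℕ)
    (ℓ : ℕ → Fin K → ℝ) (hℓ : ∀ t i, ℓ t i ∈ Set.Icc (0:ℝ) 1)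
    (η : ℝ) (hηdef : η = Real.sqrt (Real.log K / T))
    (hη0 : 0 < η) (hη2 : η ≤ 1/2)
    (π : ℕ → Fin K → ℝ) (hinit : ∀ i, π 0 i = 1 / K)
    (hupd : ∀ t i, π (t+1) i = π t i * (1 - η * (ℓ t i - ∑ j, π t j * ℓ t j)))
    (istar : Fin K) :
    ∑ t ∈ Finset.range T, ∑ j, π t j * ℓ t j - ∑ t ∈ Finset.range T, ℓ t istar
      ≤ 2 * Real.sqrt (T * Real.log K) := by
  have hK : (0 : ℝ) < K := Nat.cast_pos.2 istar.pos
  have hT : (0 : ℝ) < T := Nat.cast_pos.2 <| Nat.pos_of_ne_zero fun h => by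
    simp [h] at hηdef; linarith
  have hlog : Real.log K = η ^ 2 * T := by
    rw [hηdef, Real.sq_sqrt (div_nonneg (Real.log_natCast_nonneg K) hT.le)]; field_simp
  have hsqrt : Real.sqrt (T * Real.log K) = η * T := by
    rw [hlog, show (T : ℝ) * (η ^ 2 * T) = (η * T) ^ 2 by ring, Real.sqrt_sq (by positivity)]
  have h0 : π 0 ∈ stdSimplex ℝ (Fin K) :=
    ⟨fun i => by rw [hinit]; positivity, by simp [hinit, hK.ne']⟩
  have hreg := wsu_regret_le (fun t => funext (hupd t)) h0 (abs_le.2 ⟨by linarith, hη2⟩) hℓ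
    istar (by rw [hinit]; positivity) T
  rw [hinit, one_div, Real.log_inv, neg_neg, hlog] at hreg
  rw [hsqrt]
  refine le_of_mul_le_mul_left ?_ hη0
  linarith

/-- With step size η = √(ln K / T), WSU has regret at most 2√(T ln K). -/
theorem wsu_regret_sqrt (K T : ℕ) (hK : 1 ≤ K)
    (ℓ : ℕ → Fin K → ℝ) (hℓ : ∀ t i, ℓ t i ∈ Set.Icc (0:ℝ) 1)
    (η : ℝ) (hηdef : η = Real.sqrt (Real.log K / T))
    (hη0 : 0 < η) (hη2 : η ≤ 1/2)
    (π : ℕ → Fin K → ℝ) (hinit : ∀ i, π 0 i = 1 / K)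
    (hupd : ∀ t i, π (t+1) i = π t i * (1 - η * (ℓ t i - ∑ j, π t j * ℓ t j)))
    (istar : Fin K) :
    ∑ t ∈ Finset.range T, ∑ j, π t j * ℓ t j - ∑ t ∈ Finset.range T, ℓ t istar
      ≤ 2 * Real.sqrt (T * Real.log K) :=
  wsu_regret_sqrt_general K T ℓ hℓ η hηdef hη0 hη2 π hinit hupd istar
end

section
/- WSU is incentive-compatible: for any round t, expert i with belief b ∈ [0,1], any deviation report p ∈ [0,1], any fixed reports of other experts, and any current valid weight vector π_t, the expected next-round weight E_{r~Bernoulli(b)}[π_{i,t+1}] under truthful report b is at least that under report p. -/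
/-- WSU is incentive-compatible: the expected next-round weight is maximized
by reporting one's true belief, for any proper loss bounded in [0,1]. -/
theorem wsu_incentive_compatible (K : ℕ) (ℓ : ℝ → Bool → ℝ)
    (hℓ : ∀ x r, x ∈ Set.Icc (0:ℝ) 1 → ℓ x r ∈ Set.Icc (0:ℝ) 1)
    (hproper : ∀ b q : ℝ, b ∈ Set.Icc (0:ℝ) 1 → q ∈ Set.Icc (0:ℝ) 1 →
      b * ℓ b true + (1 - b) * ℓ b false ≤ b * ℓ q true + (1 - b) * ℓ q false)
    (π : Fin K → ℝ) (hπ0 : ∀ j, 0 ≤ π j) (hπ1 : ∑ j, π j = 1)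
    (p : Fin K → ℝ) (hp : ∀ j, p j ∈ Set.Icc (0:ℝ) 1)
    (η : ℝ) (hη0 : 0 < η) (hη1 : η ≤ 1)
    (i : Fin K) (b q : ℝ) (hb : b ∈ Set.Icc (0:ℝ) 1) (hq : q ∈ Set.Icc (0:ℝ) 1) :
    let next : (Fin K → ℝ) → Bool → ℝ := fun p' r =>
      η * (π i * (1 - ℓ (p' i) r + ∑ j, π j * ℓ (p' j) r)) + (1 - η) * π i
    b * next (Function.update p i b) true
        + (1 - b) * next (Function.update p i b) false
      ≥ b * next (Function.update p i q) true
        + (1 - b) * next (Function.update p i q) false := by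
  intro next
  have hsum : ∀ (x : ℝ) (r : Bool),
      ∑ j, π j * ℓ (Function.update p i x j) r
        = π i * ℓ x r + ∑ j ∈ Finset.univ.erase i, π j * ℓ (p j) r := by
    intro x r
    rw [← Finset.add_sum_erase _ _ (Finset.mem_univ i)]
    congr 1
    · rw [Function.update_self]
    · exact Finset.sum_congr rfl fun j hj => by
        rw [Function.update_of_ne (Finset.ne_of_mem_erase hj)]
  have hπi1 : π i ≤ 1 := by
    rw [← hπ1]
    exact Finset.single_le_sum (fun j _ => hπ0 j) (Finset.mem_univ i)
  have hD := hproper b q hb hq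
  simp only [next, hsum, Function.update_self]
  nlinarith [mul_nonneg (mul_nonneg hη0.le (mul_nonneg (hπ0 i) (by linarith : (0:ℝ) ≤ 1 - π i))) (by linarith : (0:ℝ) ≤ b * ℓ q true + (1 - b) * ℓ q false - (b * ℓ b true + (1 - b) * ℓ b false))]
end

section
/- Validity of WSU-UX weights: suppose π_{i,1} = 1/K, and at each round t an index I_t ∈ [K] is chosen, the estimated loss is ℓ̂_{I_t,t} = ℓ_{I_t,t}/π̃_{I_t,t} with ℓ̂_{i,t} = 0 for i ≠ I_t, where π̃_{i,t} = (1-γ)π_{i,t} + γ/K, and the update is π_{i,t+1} = π_{i,t}(1 - η(ℓ̂_{i,t} - Σ_j π_{j,t} ℓ̂_{j,t})). If ηK/γ ≤ 1/2, 0 < η, γ < 1/2, then for all t, π_t and π̃_t are valid probability distributions (nonnegative entries summing to 1). -/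
/-!
Both weight vectors are tracked in the standard simplex. The mixture π̃_t is a convex combination
of π_t and the uniform distribution, so it lies in the simplex and every coordinate is at least
γ/K; hence each importance-weighted estimate satisfies 0 ≤ ℓ̂_{i,t} ≤ K/γ. The update preserves
the total mass because Σ_i π_i (ℓ̂_i - Σ_j π_j ℓ̂_j) = 0, and it preserves nonnegativity because
η ℓ̂_i ≤ ηK/γ ≤ 1 while the subtracted mean Σ_j π_j ℓ̂_j is nonnegative.
-/

open Finset

section Simplex

variable {ι : Type*} [Fintype ι]

theorem uniform_mem_stdSimplex [Nonempty ι] :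
    (fun _ => 1 / (Fintype.card ι : ℝ)) ∈ stdSimplex ℝ ι := by
  refine ⟨fun _ => by positivity, ?_⟩
  simp only [sum_const, card_univ, nsmul_eq_mul]
  field_simp

theorem mix_uniform_mem_stdSimplex [Nonempty ι] {p : ι → ℝ} (hp : p ∈ stdSimplex ℝ ι)
    {γ : ℝ} (hγ0 : 0 ≤ γ) (hγ1 : γ ≤ 1) :
    (fun i => (1 - γ) * p i + γ / Fintype.card ι) ∈ stdSimplex ℝ ι := by
  have hmix := convex_stdSimplex ℝ ι hp uniform_mem_stdSimplex (sub_nonneg.2 hγ1) hγ0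
    (sub_add_cancel 1 γ)
  convert hmix using 2 with i
  simp only [Pi.add_apply, Pi.smul_apply, smul_eq_mul]
  ring

theorem div_card_le_mix_uniform {p : ι → ℝ} (hp : p ∈ stdSimplex ℝ ι) {γ : ℝ} (hγ1 : γ ≤ 1)
    (i : ι) : γ / Fintype.card ι ≤ (1 - γ) * p i + γ / Fintype.card ι :=
  le_add_of_nonneg_left (mul_nonneg (sub_nonneg.2 hγ1) (hp.1 i))

theorem mul_centred_update_mem_stdSimplex {p l : ι → ℝ} (hp : p ∈ stdSimplex ℝ ι) {η : ℝ}
    (hη : 0 ≤ η) (hl0 : ∀ i, 0 ≤ l i) (hl1 : ∀ i, η * l i ≤ 1) :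
    (fun i => p i * (1 - η * (l i - ∑ j, p j * l j))) ∈ stdSimplex ℝ ι := by
  obtain ⟨hp0, hp1⟩ := hp
  set S := ∑ j, p j * l j
  have hS : 0 ≤ η * S := mul_nonneg hη (sum_nonneg fun j _ => mul_nonneg (hp0 j) (hl0 j))
  refine ⟨fun i => mul_nonneg (hp0 i) (by linarith [hl1 i]), ?_⟩
  calc ∑ i, p i * (1 - η * (l i - S))
      = ∑ i, (p i * (1 + η * S) - η * (p i * l i)) := sum_congr rfl fun i _ => by ring
    _ = 1 := by rw [sum_sub_distrib, ← sum_mul, ← mul_sum, hp1]; ring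

end Simplex

theorem ite_div_mem_Icc {ℓ q c : ℝ} (hℓ : ℓ ∈ Set.Icc (0 : ℝ) 1) (hc : 0 < c) (hcq : c ≤ q)
    (P : Prop) [Decidable P] : (if P then ℓ / q else 0) ∈ Set.Icc 0 (1 / c) := by
  split_ifs
  · exact ⟨div_nonneg hℓ.1 (hc.trans_le hcq).le, div_le_div₀ zero_le_one hℓ.2 hc hcq⟩
  · exact ⟨le_rfl, by positivity⟩

theorem wsu_ux_weights_valid_general (K : ℕ) (hK : 1 ≤ K)
    (ℓ : ℕ → Fin K → ℝ) (hℓ : ∀ t i, ℓ t i ∈ Set.Icc (0:ℝ) 1)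
    (I : ℕ → Fin K) (η γ : ℝ)
    (hη0 : 0 < η) (hγ0 : 0 < γ) (hγ2 : γ < 1/2)
    (hmix : η * K / γ ≤ 1/2)
    (π πt : ℕ → Fin K → ℝ)
    (hinit : ∀ i, π 0 i = 1 / K)
    (hπt : ∀ t i, πt t i = (1 - γ) * π t i + γ / K)
    (lhat : ℕ → Fin K → ℝ)
    (hlhat : ∀ t i, lhat t i = if i = I t then ℓ t i / πt t i else 0)
    (hupd : ∀ t i, π (t+1) i = π t i * (1 - η * (lhat t i - ∑ j, π t j * lhat t j))) :
    ∀ t, ((∀ i, 0 ≤ π t i) ∧ ∑ i, π t i = 1) ∧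
         ((∀ i, 0 ≤ πt t i) ∧ ∑ i, πt t i = 1) := by
  have : Nonempty (Fin K) := ⟨⟨0, hK⟩⟩
  have hγ1 : γ ≤ 1 := by linarith
  have hπt_eq (t : ℕ) : πt t = fun i => (1 - γ) * π t i + γ / Fintype.card (Fin K) := by
    simpa only [Fintype.card_fin] using funext (hπt t)
  have hπ : ∀ t, π t ∈ stdSimplex ℝ (Fin K) := by
    intro t
    induction t with
    | zero =>
      rw [show π 0 = _ from funext hinit]
      simpa only [Fintype.card_fin] using uniform_mem_stdSimplex (ι := Fin K)
    | succ t ih =>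
      have hπt_ge (i : Fin K) : γ / K ≤ πt t i := by
        simpa only [hπt_eq, Fintype.card_fin] using div_card_le_mix_uniform ih hγ1 i
      have hlhat_mem (i : Fin K) : lhat t i ∈ Set.Icc 0 (K / γ) := by
        simpa only [hlhat, one_div_div] using
          ite_div_mem_Icc (hℓ t i) (by positivity) (hπt_ge i) (i = I t)
      have hη_K_div_γ : η * (K / γ) ≤ 1 := by rw [← mul_div_assoc]; linarith
      rw [show π (t + 1) = _ from funext (hupd t)]
      exact mul_centred_update_mem_stdSimplex ih hη0.le (fun i => (hlhat_mem i).1)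
        fun i => (mul_le_mul_of_nonneg_left (hlhat_mem i).2 hη0.le).trans hη_K_div_γ
  exact fun t => ⟨hπ t, hπt_eq t ▸ mix_uniform_mem_stdSimplex (hπ t) hγ0.le hγ1⟩

/-- Validity of WSU-UX weights: if ηK/γ ≤ 1/2 and 0 < η, γ < 1/2, the weights
π_t and the exploration-mixed weights π̃_t are valid probability distributions. -/
theorem wsu_ux_weights_valid (K : ℕ) (hK : 1 ≤ K)
    (ℓ : ℕ → Fin K → ℝ) (hℓ : ∀ t i, ℓ t i ∈ Set.Icc (0:ℝ) 1)
    (I : ℕ → Fin K) (η γ : ℝ)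
    (hη0 : 0 < η) (hη2 : η < 1/2) (hγ0 : 0 < γ) (hγ2 : γ < 1/2)
    (hmix : η * K / γ ≤ 1/2)
    (π πt : ℕ → Fin K → ℝ)
    (hinit : ∀ i, π 0 i = 1 / K)
    (hπt : ∀ t i, πt t i = (1 - γ) * π t i + γ / K)
    (lhat : ℕ → Fin K → ℝ)
    (hlhat : ∀ t i, lhat t i = if i = I t then ℓ t i / πt t i else 0)
    (hupd : ∀ t i, π (t+1) i = π t i * (1 - η * (lhat t i - ∑ j, π t j * lhat t j))) :
    ∀ t, ((∀ i, 0 ≤ π t i) ∧ ∑ i, π t i = 1) ∧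
         ((∀ i, 0 ≤ πt t i) ∧ ∑ i, πt t i = 1) :=
  wsu_ux_weights_valid_general K hK ℓ hℓ I η γ hη0 hγ0 hγ2 hmix π πt hinit hπt lhat hlhat hupd
end

section
/- WSU-UX second-order bound: under the WSU-UX update π_{i,t+1} = π_{i,t}(1 - η(ℓ̂_{i,t} - Σ_j π_{j,t} ℓ̂_{j,t})) with uniform initialization π_{i,1}=1/K, and assuming η(ℓ̂_{i,t} - Σ_j π_{j,t} ℓ̂_{j,t}) ≤ 1/2 for all i,t and that all π_t are valid probability vectors, for any fixed expert i*: Σ_{t∈[T]} Σ_{i∈[K]} π_{i,t} ℓ̂_{i,t} - Σ_{t∈[T]} ℓ̂_{i*,t} ≤ (ln K)/η + η Σ_{t∈[T]} ℓ̂_{i*,t}² + η Σ_{t∈[T]} Σ_{i∈[K]} π_{i,t} ℓ̂_{i,t}². -/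
/-- Key scalar inequality: for `x ≤ 1/2`, `exp (-x - x²) ≤ 1 - x`. -/
lemma exp_neg_sq_le_one_sub {x : ℝ} (hx : x ≤ 1/2) :
    Real.exp (-x - x^2) ≤ 1 - x := by
  rcases le_or_gt x 0 with h | h
  · -- x ≤ 0: exp(-x-x²) ≤ 1/(1+x+x²) ≤ 1-x
    have hp : 0 < Real.exp (x + x^2) := Real.exp_pos _
    have he : Real.exp (-x - x^2) = 1 / Real.exp (x + x^2) := by
      rw [eq_div_iff (ne_of_gt hp), ← Real.exp_add]; ring_nf; exact Real.exp_zero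
    have hlb : x + x^2 + 1 ≤ Real.exp (x + x^2) := Real.add_one_le_exp _
    have h4 : (1-x)*(x+x^2+1) ≤ (1-x)*Real.exp (x+x^2) :=
      mul_le_mul_of_nonneg_left hlb (by linarith)
    rw [he, div_le_iff₀ hp]
    nlinarith [h4, mul_nonneg (neg_nonneg.mpr h) (sq_nonneg x)]
  · -- 0 < x ≤ 1/2: use exp t ≥ 1 + t + t²/2 with t = x + x².
    have ht : (0:ℝ) ≤ x + x^2 := by nlinarith
    have hq := Real.quadratic_le_exp_of_nonneg ht
    have hp : 0 < Real.exp (x + x^2) := Real.exp_pos _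
    have he : Real.exp (-x - x^2) = 1 / Real.exp (x + x^2) := by
      rw [eq_div_iff (ne_of_gt hp), ← Real.exp_add]; ring_nf; exact Real.exp_zero
    rw [he, div_le_iff₀ hp]
    have key : (1 - x) * (1 + (x + x^2) + (x + x^2)^2 / 2) ≥ 1 := by nlinarith [sq_nonneg x]
    nlinarith [key, hq, sq_nonneg x]

/-- WSU-UX second-order bound relating estimated regret to second moments of
the estimated losses. -/
theorem wsu_ux_second_order_bound (K T : ℕ) (hK : 1 ≤ K)
    (lhat : ℕ → Fin K → ℝ) (hlhat : ∀ t i, 0 ≤ lhat t i)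
    (η : ℝ) (hη0 : 0 < η)
    (π : ℕ → Fin K → ℝ) (hinit : ∀ i, π 0 i = 1 / K)
    (hupd : ∀ t i, π (t+1) i = π t i * (1 - η * (lhat t i - ∑ j, π t j * lhat t j)))
    (hbound : ∀ t ∈ Finset.range T, ∀ i,
      η * (lhat t i - ∑ j, π t j * lhat t j) ≤ 1/2)
    (hvalid : ∀ t, (∀ i, 0 ≤ π t i) ∧ ∑ i, π t i = 1)
    (istar : Fin K) :
    ∑ t ∈ Finset.range T, ∑ i, π t i * lhat t i - ∑ t ∈ Finset.range T, lhat t istar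
      ≤ Real.log K / η + η * ∑ t ∈ Finset.range T, (lhat t istar)^2
        + η * ∑ t ∈ Finset.range T, ∑ i, π t i * (lhat t i)^2 := by
  have hKpos : (0:ℝ) < K := by exact_mod_cast Nat.lt_of_lt_of_le Nat.zero_lt_one hK
  set z : ℕ → ℝ := fun t => lhat t istar - ∑ j, π t j * lhat t j with hz
  -- lower bound on π n istar
  have main : ∀ n, n ≤ T →
      (1 / K : ℝ) * Real.exp (∑ t ∈ Finset.range n, (-(η * z t) - (η * z t)^2)) ≤ π n istar := by
    intro n hn
    induction n with
    | zero => simp [hinit istar]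
    | succ m ih =>
      have hm : m ≤ T := Nat.le_of_succ_le hn
      have ihm := ih hm
      have hb := hbound m (Finset.mem_range.mpr (Nat.lt_of_succ_le hn)) istar
      have hexp : Real.exp (-(η * z m) - (η * z m)^2) ≤ 1 - η * z m :=
        exp_neg_sq_le_one_sub hb
      have hπm : 0 ≤ π m istar := (hvalid m).1 istar
      have hrec : π (m+1) istar = π m istar * (1 - η * z m) := hupd m istar
      rw [Finset.sum_range_succ, Real.exp_add, hrec]
      calc 1 / (K:ℝ) * (Real.exp (∑ t ∈ Finset.range m, (-(η * z t) - (η * z t)^2)) *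
              Real.exp (-(η * z m) - (η * z m)^2))
          = (1 / K * Real.exp (∑ t ∈ Finset.range m, (-(η * z t) - (η * z t)^2))) *
              Real.exp (-(η * z m) - (η * z m)^2) := by ring
        _ ≤ π m istar * (1 - η * z m) := by
            apply mul_le_mul ihm hexp (le_of_lt (Real.exp_pos _)) hπm
  have hπT := main T le_rfl
  -- π T istar ≤ 1
  have hle1 : π T istar ≤ 1 := by
    have := (hvalid T).2
    calc π T istar ≤ ∑ i, π T i :=
          Finset.single_le_sum (fun i _ => (hvalid T).1 i) (Finset.mem_univ istar)
      _ = 1 := this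
  -- deduce sum bound
  have hsum : ∑ t ∈ Finset.range T, (-(η * z t) - (η * z t)^2) ≤ Real.log K := by
    have h1 : Real.exp (∑ t ∈ Finset.range T, (-(η * z t) - (η * z t)^2)) ≤ K := by
      have h2 : 1 / (K:ℝ) * Real.exp (∑ t ∈ Finset.range T, (-(η * z t) - (η * z t)^2)) ≤ 1 :=
        le_trans hπT hle1
      rw [div_mul_eq_mul_div, one_mul, div_le_one hKpos] at h2
      exact h2
    exact (Real.le_log_iff_exp_le hKpos).mpr h1
  -- rewrite sums
  have hsplit : ∑ t ∈ Finset.range T, (-(η * z t) - (η * z t)^2)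
      = -η * ∑ t ∈ Finset.range T, z t - η^2 * ∑ t ∈ Finset.range T, (z t)^2 := by
    rw [Finset.mul_sum, Finset.mul_sum, ← Finset.sum_sub_distrib]
    apply Finset.sum_congr rfl; intro t _; ring
  -- bound z t ^2
  have hz2 : ∀ t ∈ Finset.range T, (z t)^2 ≤ (lhat t istar)^2 + ∑ i, π t i * (lhat t i)^2 := by
    intro t _
    have hm0 : 0 ≤ ∑ j, π t j * lhat t j :=
      Finset.sum_nonneg fun j _ => mul_nonneg ((hvalid t).1 j) (hlhat t j)
    have hjensen : (∑ j, π t j * lhat t j)^2 ≤ ∑ j, π t j * (lhat t j)^2 := by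
      have hcs := Finset.sum_mul_sq_le_sq_mul_sq Finset.univ
        (fun j => Real.sqrt (π t j)) (fun j => Real.sqrt (π t j) * lhat t j)
      have e1 : ∀ j : Fin K, Real.sqrt (π t j) * (Real.sqrt (π t j) * lhat t j)
          = π t j * lhat t j := fun j => by
        rw [← mul_assoc, Real.mul_self_sqrt ((hvalid t).1 j)]
      have e2 : ∀ j : Fin K, Real.sqrt (π t j) ^ 2 = π t j := fun j =>
        Real.sq_sqrt ((hvalid t).1 j)
      have e3 : ∀ j : Fin K, (Real.sqrt (π t j) * lhat t j) ^ 2 = π t j * (lhat t j)^2 :=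
        fun j => by rw [mul_pow, e2 j]
      simp only [e1, e3] at hcs
      calc (∑ j, π t j * lhat t j)^2 ≤ (∑ j, Real.sqrt (π t j)^2) * ∑ j, π t j * (lhat t j)^2 := hcs
        _ = ∑ j, π t j * (lhat t j)^2 := by
            simp only [e2]; rw [(hvalid t).2, one_mul]
    have habsq : (z t)^2 ≤ (lhat t istar)^2 + (∑ j, π t j * lhat t j)^2 := by
      have h0 : z t = lhat t istar - ∑ j, π t j * lhat t j := rfl
      rw [h0]; nlinarith [mul_nonneg (hlhat t istar) hm0]
    linarith
  have hsum2 : ∑ t ∈ Finset.range T, (z t)^2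
      ≤ ∑ t ∈ Finset.range T, (lhat t istar)^2 + ∑ t ∈ Finset.range T, ∑ i, π t i * (lhat t i)^2 := by
    rw [← Finset.sum_add_distrib]
    exact Finset.sum_le_sum hz2
  -- final assembly
  have hzsum : ∑ t ∈ Finset.range T, ∑ i, π t i * lhat t i - ∑ t ∈ Finset.range T, lhat t istar
      = -∑ t ∈ Finset.range T, z t := by
    rw [← Finset.sum_neg_distrib, ← Finset.sum_sub_distrib]
    apply Finset.sum_congr rfl; intro t _; simp [hz]
  rw [hsplit] at hsum
  rw [hzsum]
  have hfin : -∑ t ∈ Finset.range T, z t ≤ Real.log K / η + η * ∑ t ∈ Finset.range T, (z t)^2 := by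
    have h5 : η * -(∑ t ∈ Finset.range T, z t)
        ≤ η * (Real.log K / η + η * ∑ t ∈ Finset.range T, (z t)^2) := by
      have hc : η * (Real.log K / η + η * ∑ t ∈ Finset.range T, (z t)^2)
          = Real.log K + η^2 * ∑ t ∈ Finset.range T, (z t)^2 := by
        field_simp
      rw [hc]; linarith [hsum]
    exact le_of_mul_le_mul_left h5 hη0
  calc -∑ t ∈ Finset.range T, z t ≤ Real.log K / η + η * ∑ t ∈ Finset.range T, (z t)^2 := hfin
    _ ≤ Real.log K / η + η * (∑ t ∈ Finset.range T, (lhat t istar)^2 + ∑ t ∈ Finset.range T, ∑ i, π t i * (lhat t i)^2) := by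
        have := mul_le_mul_of_nonneg_left hsum2 (le_of_lt hη0)
        linarith
    _ = Real.log K / η + η * ∑ t ∈ Finset.range T, (lhat t istar)^2
        + η * ∑ t ∈ Finset.range T, ∑ i, π t i * (lhat t i)^2 := by ring
end

section
/- WSU-UX expected regret bound in intermediate form: under the assumptions of the WSU-UX analysis (π̃_{i,t} ≥ γ/K, π_{i,t} ≤ 2π̃_{i,t} for γ ≤ 1/2, losses in [0,1], T rounds), the expected regret satisfies Σ_{t∈[T]} Σ_{i∈[K]} π̃_{i,t} ℓ_{i,t} - Σ_{t∈[T]} ℓ_{i*,t} ≤ γT + ηKT/γ + (ln K)/η + 2ηKT. -/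
/-- WSU-UX expected regret bound in intermediate form: combining the
second-order bound (after taking expectations via the unbiased estimator) with
π̃_{i,t} = (1-γ)π_{i,t} + γ/K yields the stated bound on expected regret. -/
theorem wsu_ux_expected_regret_intermediate (K T : ℕ) (hK : 1 ≤ K)
    (ℓ : ℕ → Fin K → ℝ) (hℓ : ∀ t i, ℓ t i ∈ Set.Icc (0:ℝ) 1)
    (η γ : ℝ) (hη0 : 0 < η) (hγ0 : 0 < γ) (hγ2 : γ ≤ 1/2)
    (π πt : ℕ → Fin K → ℝ)
    (hπ0 : ∀ t i, 0 ≤ π t i) (hπ1 : ∀ t, ∑ i, π t i = 1)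
    (hπt : ∀ t i, πt t i = (1 - γ) * π t i + γ / K)
    (istar : Fin K)
    (hsecond : ∑ t ∈ Finset.range T, ∑ i, π t i * ℓ t i
        - ∑ t ∈ Finset.range T, ℓ t istar
      ≤ η * ∑ t ∈ Finset.range T, (1 / πt t istar) + Real.log K / η
        + η * ∑ t ∈ Finset.range T, ∑ i, π t i * (1 / πt t i)) :
    ∑ t ∈ Finset.range T, ∑ i, πt t i * ℓ t i - ∑ t ∈ Finset.range T, ℓ t istar
      ≤ γ * T + η * K * T / γ + Real.log K / η + 2 * η * K * T := by
  have hK0 : (0:ℝ) < K := by exact_mod_cast hK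
  have hγK : (0:ℝ) < γ / K := div_pos hγ0 hK0
  have hπtlb : ∀ t i, γ / K ≤ πt t i := by
    intro t i
    rw [hπt]
    nlinarith [hπ0 t i, hγ2]
  have hπtpos : ∀ t i, 0 < πt t i := fun t i => lt_of_lt_of_le hγK (hπtlb t i)
  -- step 1: per-round shift
  have h1 : ∀ t, ∑ i, πt t i * ℓ t i ≤ ∑ i, π t i * ℓ t i + γ := by
    intro t
    have hsum : ∑ i, πt t i * ℓ t i
        = (1 - γ) * ∑ i, π t i * ℓ t i + (γ / K) * ∑ i, ℓ t i := by
      rw [Finset.mul_sum, Finset.mul_sum, ← Finset.sum_add_distrib]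
      refine Finset.sum_congr rfl fun i _ => ?_
      rw [hπt]; ring
    rw [hsum]
    have hℓK : ∑ i, ℓ t i ≤ K := by
      calc ∑ i, ℓ t i ≤ ∑ _i : Fin K, (1:ℝ) :=
            Finset.sum_le_sum fun i _ => (hℓ t i).2
        _ = K := by simp
    have hπℓ0 : 0 ≤ ∑ i, π t i * ℓ t i :=
      Finset.sum_nonneg fun i _ => mul_nonneg (hπ0 t i) (hℓ t i).1
    have hγKK : γ / K * K = γ := div_mul_cancel₀ γ (ne_of_gt hK0)
    nlinarith [mul_le_mul_of_nonneg_left hℓK (le_of_lt hγK),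
      mul_nonneg hγ0.le hπℓ0]
  -- step 2: 1/πt ≤ K/γ
  have h2 : ∀ t i, 1 / πt t i ≤ K / γ := by
    intro t i
    rw [div_le_div_iff₀ (hπtpos t i) hγ0, one_mul]
    have := hπtlb t i
    calc γ = (γ / K) * K := by field_simp
      _ ≤ πt t i * K := by nlinarith
      _ = K * πt t i := mul_comm _ _
  -- step 3: ∑ π/πt ≤ 2K
  have h3 : ∀ t, ∑ i, π t i * (1 / πt t i) ≤ 2 * K := by
    intro t
    have : ∀ i : Fin K, π t i * (1 / πt t i) ≤ 2 := by
      intro i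
      have hlt : π t i ≤ 2 * πt t i := by
        rw [hπt]; nlinarith [hπ0 t i, le_of_lt hγK]
      rw [mul_one_div, div_le_iff₀ (hπtpos t i)]
      linarith
    calc ∑ i, π t i * (1 / πt t i) ≤ ∑ _i : Fin K, (2:ℝ) :=
          Finset.sum_le_sum fun i _ => this i
      _ = 2 * K := by simp [mul_comm]
  -- assemble
  have hA : ∑ t ∈ Finset.range T, ∑ i, πt t i * ℓ t i
      ≤ ∑ t ∈ Finset.range T, ∑ i, π t i * ℓ t i + γ * T := by
    calc ∑ t ∈ Finset.range T, ∑ i, πt t i * ℓ t i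
        ≤ ∑ t ∈ Finset.range T, (∑ i, π t i * ℓ t i + γ) :=
          Finset.sum_le_sum fun t _ => h1 t
      _ = ∑ t ∈ Finset.range T, ∑ i, π t i * ℓ t i + γ * T := by
          rw [Finset.sum_add_distrib]; simp [mul_comm]
  have hB : η * ∑ t ∈ Finset.range T, (1 / πt t istar) ≤ η * K * T / γ := by
    have : ∑ t ∈ Finset.range T, (1 / πt t istar) ≤ T * (K / γ) := by
      calc ∑ t ∈ Finset.range T, (1 / πt t istar)
          ≤ ∑ _t ∈ Finset.range T, (K / γ : ℝ) :=
            Finset.sum_le_sum fun t _ => h2 t istar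
        _ = T * (K / γ) := by simp [mul_comm]
    calc η * ∑ t ∈ Finset.range T, (1 / πt t istar)
        ≤ η * (T * (K / γ)) := by nlinarith
      _ = η * K * T / γ := by ring
  have hC : η * ∑ t ∈ Finset.range T, ∑ i, π t i * (1 / πt t i)
      ≤ 2 * η * K * T := by
    have : ∑ t ∈ Finset.range T, ∑ i, π t i * (1 / πt t i) ≤ T * (2 * K) := by
      calc ∑ t ∈ Finset.range T, ∑ i, π t i * (1 / πt t i)
          ≤ ∑ _t ∈ Finset.range T, (2 * K : ℝ) :=
            Finset.sum_le_sum fun t _ => h3 t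
        _ = T * (2 * K) := by simp [mul_comm]
    calc η * ∑ t ∈ Finset.range T, ∑ i, π t i * (1 / πt t i)
        ≤ η * (T * (2 * K)) := by nlinarith
      _ = 2 * η * K * T := by ring
  linarith
end
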